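/- For every θ ∈ ℝ, the expectation value of the interaction term in the post-protocol state satisfies Tr[ρ_QET(θ)·V] = (2k/√(h²+k²))·[−h·sin 2θ + k·(1 − cos 2θ)]. -/

import Mathlib

open Matrix Kronecker
open scoped ComplexOrder

noncomputable section

abbrev M2 : Type := Matrix (Fin 2) (Fin 2) ℂ
abbrev M4 : Type := Matrix (Fin 2 × Fin 2) (Fin 2 × Fin 2) ℂ

/-- Pauli X matrix. -/
def σx : M2 := !![0, 1; 1, 0]
/-- Pauli Y matrix. -/
def σy : M2 := !![0, -Complex.I; Complex.I, 0]
/-- Pauli Z matrix. -/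
def σz : M2 := !![1, 0; 0, -1]

def X1 : M4 := σx ⊗ₖ (1 : M2)
def Z1 : M4 := σz ⊗ₖ (1 : M2)
def Z2 : M4 := (1 : M2) ⊗ₖ σz
def Y2 : M4 := (1 : M2) ⊗ₖ σy
def XX : M4 := σx ⊗ₖ σx

def H1m (k h : ℝ) : M4 := (h : ℂ) • Z1 + ((h ^ 2 / Real.sqrt (h ^ 2 + k ^ 2) : ℝ) : ℂ) • (1 : M4)
def H2m (k h : ℝ) : M4 := (h : ℂ) • Z2 + ((h ^ 2 / Real.sqrt (h ^ 2 + k ^ 2) : ℝ) : ℂ) • (1 : M4)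
def Vm (k h : ℝ) : M4 :=
  ((2 * k : ℝ) : ℂ) • XX + ((2 * k ^ 2 / Real.sqrt (h ^ 2 + k ^ 2) : ℝ) : ℂ) • (1 : M4)
def Hm (k h : ℝ) : M4 := H1m k h + H2m k h + Vm k h

def e00 : (Fin 2 × Fin 2) → ℂ := fun p => if p = (0, 0) then 1 else 0
def e11 : (Fin 2 × Fin 2) → ℂ := fun p => if p = (1, 1) then 1 else 0

/-- the ground state of the minimal QET Hamiltonian -/
def gs (k h : ℝ) : (Fin 2 × Fin 2) → ℂ := fun p =>
  ((1 / Real.sqrt 2 * Real.sqrt (1 - h / Real.sqrt (h ^ 2 + k ^ 2)) : ℝ) : ℂ) * e00 p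
  - ((1 / Real.sqrt 2 * Real.sqrt (1 + h / Real.sqrt (h ^ 2 + k ^ 2)) : ℝ) : ℂ) * e11 p

/-- the rank-one operator |g⟩⟨g| -/
def gProj (k h : ℝ) : M4 := Matrix.vecMulVec (gs k h) (star (gs k h))

/-- Alice's projective measurement operator -/
def PA (μ : ℝ) : M4 := (2 : ℂ)⁻¹ • ((1 : M4) + (μ : ℂ) • X1)

/-- Bob's conditional unitary -/
def UB (ν θ : ℝ) : M4 :=
  ((Real.cos θ : ℝ) : ℂ) • (1 : M4) - ((Complex.I * ν * Real.sin θ) : ℂ) • Y2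

/-- the post-protocol state -/
def ρQET (k h θ : ℝ) : M4 :=
  UB (-1) θ * PA (-1) * gProj k h * PA (-1) * (UB (-1) θ)ᴴ
  + UB 1 θ * PA 1 * gProj k h * PA 1 * (UB 1 θ)ᴴ

/-- the normalized post-measurement state with prover outcome μ and verifier operation UB ν θ -/
def ρMN (k h μ ν θ : ℝ) : M4 := (2 : ℂ) • (UB ν θ * PA μ * gProj k h * PA μ * (UB ν θ)ᴴ)

/-! In the Heisenberg picture the protocol sends an observable `M` to
`∑_μ P_A(μ) U_B(μ,θ)† M U_B(μ,θ) P_A(μ)`. Since `Y₂` is a Hermitian involution anticommuting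
with `X ⊗ X`, conjugation by `U_B(μ,θ) = cos θ - i μ sin θ Y₂` rotates `X ⊗ X` into
`cos 2θ X ⊗ X + μ sin 2θ X ⊗ Z`. Both terms commute with `X₁`, so the measurement keeps
`X ⊗ X` and turns `μ X ⊗ Z` into `X₁ (X ⊗ Z) = Z₂`. Hence
`Tr[ρ_QET V] = 2k cos 2θ ⟨X ⊗ X⟩ + 2k sin 2θ ⟨Z₂⟩ + 2k²/r`, and in the ground state
`⟨X ⊗ X⟩ = -k/r` and `⟨Z₂⟩ = -h/r`. -/

section Conjugation

variable {n : Type*} [Fintype n] [DecidableEq n]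

theorem smul_one_add_smul_mul_mul_smul_one_sub_smul {Y A : Matrix n n ℂ} (hYY : Y * Y = 1)
    (hYA : Y * A = -(A * Y)) (c s : ℂ) :
    (c • 1 + s • Y) * A * (c • 1 - s • Y) = (c ^ 2 + s ^ 2) • A - (2 * c * s) • (A * Y) := by
  have hAYY : A * Y * Y = A := by rw [Matrix.mul_assoc, hYY, Matrix.mul_one]
  simp only [add_mul, mul_sub, smul_mul_assoc, mul_smul_comm, Matrix.one_mul, Matrix.mul_one,
    hYA, neg_mul, hAYY]
  module

theorem smul_one_add_smul_mul_smul_one_sub_smul {Y : Matrix n n ℂ} (hYY : Y * Y = 1) (c s : ℂ) :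
    (c • 1 + s • Y) * (c • 1 - s • Y) = (c ^ 2 - s ^ 2) • 1 := by
  simp only [add_mul, mul_sub, smul_mul_assoc, mul_smul_comm, Matrix.one_mul, Matrix.mul_one, hYY]
  module

end Conjugation

def XZ : M4 := σx ⊗ₖ σz

theorem σx_mul_σx : σx * σx = 1 := by
  ext i j; fin_cases i <;> fin_cases j <;> simp [σx]

theorem σy_mul_σy : σy * σy = 1 := by
  ext i j; fin_cases i <;> fin_cases j <;> simp [σy]

theorem σx_mul_σy : σx * σy = Complex.I • σz := by
  ext i j; fin_cases i <;> fin_cases j <;> simp [σx, σy, σz]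

theorem σy_mul_σx : σy * σx = (-Complex.I) • σz := by
  ext i j; fin_cases i <;> fin_cases j <;> simp [σx, σy, σz]

theorem σy_conjTranspose : σyᴴ = σy := by
  ext i j; fin_cases i <;> fin_cases j <;> simp [σy]

theorem X1_mul_X1 : X1 * X1 = 1 := by
  rw [X1, ← mul_kronecker_mul, σx_mul_σx, Matrix.one_mul, one_kronecker_one]

theorem Y2_mul_Y2 : Y2 * Y2 = 1 := by
  rw [Y2, ← mul_kronecker_mul, σy_mul_σy, Matrix.one_mul, one_kronecker_one]

theorem Y2_conjTranspose : Y2ᴴ = Y2 := by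
  rw [Y2, conjTranspose_kronecker, conjTranspose_one, σy_conjTranspose]

theorem XX_mul_Y2 : XX * Y2 = Complex.I • XZ := by
  rw [XX, Y2, XZ, ← mul_kronecker_mul, σx_mul_σy, Matrix.mul_one, kronecker_smul]

theorem Y2_mul_XX : Y2 * XX = -(XX * Y2) := by
  rw [XX_mul_Y2, XX, Y2, XZ, ← mul_kronecker_mul, σy_mul_σx, Matrix.one_mul,
    kronecker_smul, neg_smul]

theorem X1_commute_XX : Commute X1 XX := by
  simp only [Commute, SemiconjBy, X1, XX, ← mul_kronecker_mul, Matrix.one_mul, Matrix.mul_one]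

theorem X1_commute_XZ : Commute X1 XZ := by
  simp only [Commute, SemiconjBy, X1, XZ, ← mul_kronecker_mul, Matrix.one_mul, Matrix.mul_one]

theorem X1_mul_XZ : X1 * XZ = Z2 := by
  rw [X1, XZ, Z2, ← mul_kronecker_mul, σx_mul_σx, Matrix.one_mul]

section GroundState

variable (k h : ℝ)

def gsCoeff₀ : ℝ := 1 / Real.sqrt 2 * Real.sqrt (1 - h / Real.sqrt (h ^ 2 + k ^ 2))

def gsCoeff₃ : ℝ := 1 / Real.sqrt 2 * Real.sqrt (1 + h / Real.sqrt (h ^ 2 + k ^ 2))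

theorem abs_div_sqrt_sq_add_sq_le_one : |h / Real.sqrt (h ^ 2 + k ^ 2)| ≤ 1 := by
  rw [abs_div, abs_of_nonneg (Real.sqrt_nonneg _)]
  exact div_le_one_of_le₀ (Real.abs_le_sqrt (by nlinarith)) (Real.sqrt_nonneg _)

theorem gsCoeff₀_sq : gsCoeff₀ k h ^ 2 = (1 - h / Real.sqrt (h ^ 2 + k ^ 2)) / 2 := by
  have hle := (abs_le.mp (abs_div_sqrt_sq_add_sq_le_one k h)).2
  rw [gsCoeff₀, mul_pow, div_pow, one_pow, Real.sq_sqrt zero_le_two, Real.sq_sqrt (by linarith)]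
  ring

theorem gsCoeff₃_sq : gsCoeff₃ k h ^ 2 = (1 + h / Real.sqrt (h ^ 2 + k ^ 2)) / 2 := by
  have hle := (abs_le.mp (abs_div_sqrt_sq_add_sq_le_one k h)).1
  rw [gsCoeff₃, mul_pow, div_pow, one_pow, Real.sq_sqrt zero_le_two, Real.sq_sqrt (by linarith)]
  ring

theorem gsCoeff₀_mul_gsCoeff₃ (hk : 0 < k) :
    gsCoeff₀ k h * gsCoeff₃ k h = k / (2 * Real.sqrt (h ^ 2 + k ^ 2)) := by
  have hr : 0 < Real.sqrt (h ^ 2 + k ^ 2) := Real.sqrt_pos.2 (by positivity)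
  have hr2 : Real.sqrt (h ^ 2 + k ^ 2) ^ 2 = h ^ 2 + k ^ 2 := Real.sq_sqrt (by positivity)
  refine (sq_eq_sq₀ (by unfold gsCoeff₀ gsCoeff₃; positivity) (by positivity)).1 ?_
  rw [mul_pow, gsCoeff₀_sq, gsCoeff₃_sq]
  field_simp
  linear_combination hr2

theorem gs_eq : gs k h = fun p => (gsCoeff₀ k h : ℂ) * e00 p - (gsCoeff₃ k h : ℂ) * e11 p := rfl

theorem trace_gProj_mul (M : M4) :
    (gProj k h * M).trace = (gsCoeff₀ k h : ℂ) ^ 2 * M (0, 0) (0, 0)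
      - (gsCoeff₀ k h : ℂ) * gsCoeff₃ k h * (M (0, 0) (1, 1) + M (1, 1) (0, 0))
      + (gsCoeff₃ k h : ℂ) ^ 2 * M (1, 1) (1, 1) := by
  simp only [gProj, gs_eq, e00, e11, trace, diag_apply, Matrix.mul_apply, vecMulVec_apply,
    Pi.star_apply, star_sub, star_mul', apply_ite star, star_one, star_zero, Complex.star_def,
    Complex.conj_ofReal, Fintype.sum_prod_type, Fin.sum_univ_two, Prod.mk.injEq, zero_ne_one,
    one_ne_zero, and_true, and_false, if_true, if_false, mul_one, mul_zero, sub_zero,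
    zero_sub]
  ring

theorem trace_gProj : (gProj k h).trace = 1 := by
  rw [← Matrix.mul_one (gProj k h), trace_gProj_mul]
  simp only [Matrix.one_apply_eq,
    Matrix.one_apply_ne (by decide : ((0, 0) : Fin 2 × Fin 2) ≠ (1, 1)),
    Matrix.one_apply_ne (by decide : ((1, 1) : Fin 2 × Fin 2) ≠ (0, 0))]
  have h₀ := congrArg ((↑) : ℝ → ℂ) (gsCoeff₀_sq k h)
  have h₃ := congrArg ((↑) : ℝ → ℂ) (gsCoeff₃_sq k h)
  push_cast at h₀ h₃
  linear_combination h₀ + h₃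

theorem trace_gProj_mul_Z2 :
    (gProj k h * Z2).trace = -((h / Real.sqrt (h ^ 2 + k ^ 2) : ℝ) : ℂ) := by
  rw [trace_gProj_mul]
  have h₀ := congrArg ((↑) : ℝ → ℂ) (gsCoeff₀_sq k h)
  have h₃ := congrArg ((↑) : ℝ → ℂ) (gsCoeff₃_sq k h)
  push_cast at h₀ h₃ ⊢
  simp only [Z2, σz, kroneckerMap_apply, of_apply, cons_val', cons_val_zero, cons_val_one,
    cons_val_fin_one, one_apply_eq, one_apply_ne, ne_eq, zero_ne_one, one_ne_zero,
    not_false_eq_true, mul_one, mul_zero, mul_neg, add_zero, sub_zero]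
  linear_combination h₀ - h₃

theorem trace_gProj_mul_XX (hk : 0 < k) :
    (gProj k h * XX).trace = -((k / Real.sqrt (h ^ 2 + k ^ 2) : ℝ) : ℂ) := by
  rw [trace_gProj_mul]
  have h₀₃ := congrArg ((↑) : ℝ → ℂ) (gsCoeff₀_mul_gsCoeff₃ k h hk)
  push_cast at h₀₃ ⊢
  simp only [XX, σx, kroneckerMap_apply, of_apply, cons_val', cons_val_zero, cons_val_one,
    cons_val_fin_one, mul_one, mul_zero, zero_sub, add_zero, neg_inj]
  linear_combination 2 * h₀₃

end GroundState

theorem UB_conjTranspose (ν θ : ℝ) :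
    (UB ν θ)ᴴ = ((Real.cos θ : ℝ) : ℂ) • (1 : M4) + (Complex.I * ν * Real.sin θ) • Y2 := by
  simp only [UB, conjTranspose_sub, conjTranspose_smul, conjTranspose_one, Y2_conjTranspose,
    star_mul', Complex.star_def, Complex.conj_ofReal, Complex.conj_I, neg_mul, neg_smul,
    sub_neg_eq_add]

theorem UB_conjTranspose_mul_UB {ν : ℝ} (hν : ν ^ 2 = 1) (θ : ℝ) : (UB ν θ)ᴴ * UB ν θ = 1 := by
  have hν' : (ν : ℂ) ^ 2 = 1 := by exact_mod_cast hν
  have hcs : (Real.cos θ : ℂ) ^ 2 + (Real.sin θ : ℂ) ^ 2 = 1 := by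
    exact_mod_cast Real.cos_sq_add_sin_sq θ
  have hscalar : ((Real.cos θ : ℝ) : ℂ) ^ 2 - (Complex.I * ν * Real.sin θ) ^ 2 = 1 := by
    linear_combination (Real.sin θ : ℂ) ^ 2 * hν' + hcs
      - (ν : ℂ) ^ 2 * (Real.sin θ : ℂ) ^ 2 * Complex.I_sq
  rw [UB_conjTranspose, UB, smul_one_add_smul_mul_smul_one_sub_smul Y2_mul_Y2, hscalar, one_smul]

theorem UB_conjTranspose_mul_XX_mul_UB {ν : ℝ} (hν : ν ^ 2 = 1) (θ : ℝ) :
    (UB ν θ)ᴴ * XX * UB ν θ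
      = ((Real.cos (2 * θ) : ℝ) : ℂ) • XX + ((ν * Real.sin (2 * θ) : ℝ) : ℂ) • XZ := by
  have hν' : (ν : ℂ) ^ 2 = 1 := by exact_mod_cast hν
  rw [UB_conjTranspose, UB, smul_one_add_smul_mul_mul_smul_one_sub_smul Y2_mul_Y2 Y2_mul_XX,
    XX_mul_Y2, smul_smul, sub_eq_add_neg, ← neg_smul, Real.cos_two_mul', Real.sin_two_mul]
  simp only [Complex.ofReal_sub, Complex.ofReal_mul, Complex.ofReal_pow, Complex.ofReal_ofNat]
  congr 2
  · linear_combination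
      (ν : ℂ) ^ 2 * (Real.sin θ : ℂ) ^ 2 * Complex.I_sq - (Real.sin θ : ℂ) ^ 2 * hν'
  · linear_combination -2 * ν * (Real.cos θ : ℂ) * (Real.sin θ : ℂ) * Complex.I_sq

theorem sum_PA_conj_of_commute {B₀ B₁ : M4} (h₀ : Commute X1 B₀) (h₁ : Commute X1 B₁) :
    PA (-1) * (B₀ - B₁) * PA (-1) + PA 1 * (B₀ + B₁) * PA 1 = B₀ + X1 * B₁ := by
  have hB₀ : X1 * B₀ * X1 = B₀ := by rw [h₀.eq, Matrix.mul_assoc, X1_mul_X1, Matrix.mul_one]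
  have hB₁ : X1 * B₁ * X1 = B₁ := by rw [h₁.eq, Matrix.mul_assoc, X1_mul_X1, Matrix.mul_one]
  simp only [PA, Complex.ofReal_neg, Complex.ofReal_one, neg_smul, one_smul, add_mul, mul_add,
    sub_mul, mul_sub, neg_mul, mul_neg, smul_mul_assoc, mul_smul_comm, Matrix.one_mul,
    Matrix.mul_one, hB₀, hB₁, h₀.eq.symm, h₁.eq.symm]
  module

def qetHeisenberg (θ : ℝ) (M : M4) : M4 :=
  PA (-1) * ((UB (-1) θ)ᴴ * M * UB (-1) θ) * PA (-1) + PA 1 * ((UB 1 θ)ᴴ * M * UB 1 θ) * PA 1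

theorem trace_ρQET_mul (k h θ : ℝ) (M : M4) :
    (ρQET k h θ * M).trace = (gProj k h * qetHeisenberg θ M).trace := by
  have cycle (U P : M4) : (U * P * gProj k h * P * Uᴴ * M).trace
      = (gProj k h * (P * (Uᴴ * M * U) * P)).trace := by
    simp only [Matrix.mul_assoc]
    rw [trace_mul_comm U, Matrix.mul_assoc, trace_mul_comm P]
    simp only [Matrix.mul_assoc]
  rw [ρQET, qetHeisenberg, Matrix.add_mul, Matrix.mul_add, trace_add, trace_add, cycle, cycle]

theorem qetHeisenberg_Vm (k h θ : ℝ) :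
    qetHeisenberg θ (Vm k h)
      = ((2 * k * Real.cos (2 * θ) : ℝ) : ℂ) • XX + ((2 * k * Real.sin (2 * θ) : ℝ) : ℂ) • Z2
        + ((2 * k ^ 2 / Real.sqrt (h ^ 2 + k ^ 2) : ℝ) : ℂ) • 1 := by
  set B₀ : M4 := ((2 * k * Real.cos (2 * θ) : ℝ) : ℂ) • XX
    + ((2 * k ^ 2 / Real.sqrt (h ^ 2 + k ^ 2) : ℝ) : ℂ) • 1
  set B₁ : M4 := ((2 * k * Real.sin (2 * θ) : ℝ) : ℂ) • XZ
  have conj {ν : ℝ} (hν : ν ^ 2 = 1) : (UB ν θ)ᴴ * Vm k h * UB ν θ = B₀ + (ν : ℂ) • B₁ := by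
    simp only [Vm, Matrix.mul_add, Matrix.add_mul, Matrix.mul_smul, Matrix.smul_mul,
      Matrix.mul_one, UB_conjTranspose_mul_XX_mul_UB hν, UB_conjTranspose_mul_UB hν, B₀, B₁]
    push_cast
    module
  have hB₀ : Commute X1 B₀ :=
    ((X1_commute_XX.smul_right _).add_right ((Commute.one_right X1).smul_right _))
  rw [qetHeisenberg, conj (by norm_num), conj (by norm_num), Complex.ofReal_neg,
    Complex.ofReal_one, neg_smul, one_smul, ← sub_eq_add_neg,
    sum_PA_conj_of_commute hB₀ (X1_commute_XZ.smul_right _), Matrix.mul_smul, X1_mul_XZ]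
  simp only [B₀]
  abel

theorem qet_V_expectation_general (k h : ℝ) (hk : 0 < k) (θ : ℝ) :
    (ρQET k h θ * Vm k h).trace =
      ((2 * k / Real.sqrt (h ^ 2 + k ^ 2) *
        (-h * Real.sin (2 * θ) + k * (1 - Real.cos (2 * θ))) : ℝ) : ℂ) := by
  rw [trace_ρQET_mul, qetHeisenberg_Vm, Matrix.mul_add, Matrix.mul_add, trace_add, trace_add,
    Matrix.mul_smul, Matrix.mul_smul, Matrix.mul_smul, trace_smul, trace_smul, trace_smul,
    trace_gProj_mul_XX k h hk, trace_gProj_mul_Z2, Matrix.mul_one, trace_gProj]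
  push_cast
  ring

/-- `Tr[ρ_QET(θ)·V] = (2k/√(h²+k²))·[−h·sin 2θ + k·(1 − cos 2θ)]`. -/
theorem qet_V_expectation (k h : ℝ) (hk : 0 < k) (hh : 0 < h) (θ : ℝ) :
    (ρQET k h θ * Vm k h).trace =
      ((2 * k / Real.sqrt (h ^ 2 + k ^ 2) *
        (-h * Real.sin (2 * θ) + k * (1 - Real.cos (2 * θ))) : ℝ) : ℂ) :=
  qet_V_expectation_general k h hk θ
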